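/- Soundness of the abstract interpretation: for any program P, (i) if P:[] →* e:ρ and e:ρ ⇓ e':ρ' in the environment-based semantics, then e ⇓ e' in the approximate semantics for P; and (ii) if P:[] →* e:ρ and e:ρ → e':ρ', then e → e' in the approximate semantics for P. -/

import Mathlib

/- Untyped λ-expressions. -/
inductive Exp : Type
  | var : String → Exp
  | app : Exp → Exp → Exp
  | lam : String → Exp → Exp
deriving DecidableEq

namespace Exp

/-- Free variables. -/
def fv : Exp → Finset String
  | var x => {x}
  | app e1 e2 => fv e1 ∪ fv e2
  | lam x e => fv e \ {x}

/-- The set of subexpressions of a λ-expression. -/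
def subexp : Exp → Set Exp
  | var x => {var x}
  | app e1 e2 => insert (app e1 e2) (subexp e1 ∪ subexp e2)
  | lam x e => insert (lam x e) (subexp e)

end Exp

/- Values (closures), environments and states of the environment-based
semantics.  An environment is a (partial) map from variable names to values;
a state `e:ρ` pairs an expression with an environment. -/
inductive Val : Type
  | clos : String → Exp → (String → Option Val) → Val

abbrev Env := String → Option Val
abbrev State := Exp × Env

/-- A value `λx.e:ρ` viewed as a state. -/
def Val.toState : Val → State
  | .clos x e ρ => (Exp.lam x e, ρ)

/-- The λ-expression component of a value. -/
def Val.toExp : Val → Exp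
  | .clos x e _ => Exp.lam x e

def Env.update (ρ : Env) (x : String) (v : Val) : Env :=
  fun y => if y = x then some v else ρ y

def Env.empty : Env := fun _ => none
/- Environment-based evaluation `s ⇓ v` and the call relations
`→r` (Operator), `→d` (Operand), `→c` (Call); (Apply) evaluates an
application via its `→c` call. -/
mutual
  inductive EvalE : State → Val → Prop
    | value (x : String) (e : Exp) (ρ : Env) :
        EvalE (Exp.lam x e, ρ) (Val.clos x e ρ)
    | var {ρ : Env} {x : String} {v : Val} :
        ρ x = some v → EvalE (Exp.var x, ρ) v
    | apply {s s' : State} {v : Val} :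
        CallC s s' → EvalE s' v → EvalE s v
  inductive CallC : State → State → Prop
    | call {e1 e2 : Exp} {ρ ρ0 : Env} {x : String} {e0 : Exp} {v2 : Val} :
        EvalE (e1, ρ) (Val.clos x e0 ρ0) → EvalE (e2, ρ) v2 →
        CallC (Exp.app e1 e2, ρ) (e0, Env.update ρ0 x v2)
end

inductive CallR : State → State → Prop
  | oper (e1 e2 : Exp) (ρ : Env) : CallR (Exp.app e1 e2, ρ) (e1, ρ)

inductive CallD : State → State → Prop
  | opnd {e1 : Exp} {ρ : Env} {v1 : Val} (e2 : Exp) :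
      EvalE (e1, ρ) v1 → CallD (Exp.app e1 e2, ρ) (e2, ρ)

/-- The call relation `→` on states is `→r ∪ →d ∪ →c`. -/
def Call (s s' : State) : Prop := CallR s s' ∨ CallD s s' ∨ CallC s s'
/- Approximate evaluation and call rules (abstract interpretation of the
environment semantics with environments removed), relative to a fixed
program `P`. -/
mutual
  inductive EvalA (P : Exp) : Exp → Exp → Prop
    | value (x : String) (e : Exp) : EvalA P (Exp.lam x e) (Exp.lam x e)
    | var {e1 e2 : Exp} {x : String} {e0 v2 : Exp} :
        Exp.app e1 e2 ∈ Exp.subexp P →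
        EvalA P e1 (Exp.lam x e0) → EvalA P e2 v2 →
        EvalA P (Exp.var x) v2
    | apply {a e' v : Exp} : CallAC P a e' → EvalA P e' v → EvalA P a v
  inductive CallAC (P : Exp) : Exp → Exp → Prop
    | call {e1 e2 : Exp} {x : String} {e0 v2 : Exp} :
        EvalA P e1 (Exp.lam x e0) → EvalA P e2 v2 →
        CallAC P (Exp.app e1 e2) e0
end

inductive CallAR (P : Exp) : Exp → Exp → Prop
  | oper (e1 e2 : Exp) : CallAR P (Exp.app e1 e2) e1

inductive CallAD (P : Exp) : Exp → Exp → Prop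
  | opnd (e1 e2 : Exp) : CallAD P (Exp.app e1 e2) e2

/-- The approximate call relation `→` is `→r ∪ →d ∪ →c`. -/
def CallA (P : Exp) (e e' : Exp) : Prop :=
  CallAR P e e' ∨ CallAD P e e' ∨ CallAC P e e'

/-! The approximate semantics forgets environments, so it is sound on every state whose
environment is itself "explained" by `P`: each closure in it (recursively) is a λ of `P`,
and each binding `y ↦ v` satisfies `y ⇓ v` approximately. Such environments are preserved by
evaluation, because the only new binding `x ↦ v₂` is created by (Call) at an application
`e₁@e₂` of `P` with `e₁ ⇓ λx.e₀` and `e₂ ⇓ v₂`, which are exactly the premises of (VarA). -/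

namespace Exp

theorem mem_subexp_self (e : Exp) : e ∈ e.subexp := by
  cases e <;> simp [subexp]

theorem subexp_subset_of_mem {a b : Exp} (h : a ∈ b.subexp) : a.subexp ⊆ b.subexp := by
  induction b with
  | var x => simp_all [subexp]
  | app b₁ b₂ ih₁ ih₂ =>
    simp only [subexp, Set.mem_insert_iff, Set.mem_union] at h
    rcases h with rfl | h | h
    · rfl
    · exact (ih₁ h).trans (Set.subset_union_left.trans (Set.subset_insert _ _))
    · exact (ih₂ h).trans (Set.subset_union_right.trans (Set.subset_insert _ _))
  | lam x b ih =>
    simp only [subexp, Set.mem_insert_iff] at h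
    rcases h with rfl | h
    · rfl
    · exact (ih h).trans (Set.subset_insert _ _)

variable {P e₁ e₂ e : Exp} {x : String}

theorem mem_subexp_of_app_left (h : app e₁ e₂ ∈ P.subexp) : e₁ ∈ P.subexp :=
  subexp_subset_of_mem h (by simp [subexp, mem_subexp_self])

theorem mem_subexp_of_app_right (h : app e₁ e₂ ∈ P.subexp) : e₂ ∈ P.subexp :=
  subexp_subset_of_mem h (by simp [subexp, mem_subexp_self])

theorem mem_subexp_of_lam (h : lam x e ∈ P.subexp) : e ∈ P.subexp :=
  subexp_subset_of_mem h (by simp [subexp, mem_subexp_self])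

end Exp

-- The environment condition is split into two premises, as a nested occurrence under `∧`
-- is not accepted by the kernel; `wellFormedVal_clos_iff` restores the `WellFormedEnv` form.
inductive WellFormedVal (P : Exp) : Val → Prop
  | clos {x : String} {e : Exp} {ρ : Env} :
      Exp.lam x e ∈ P.subexp →
      (∀ y v, ρ y = some v → WellFormedVal P v) →
      (∀ y v, ρ y = some v → EvalA P (Exp.var y) v.toExp) →
      WellFormedVal P (Val.clos x e ρ)

def WellFormedEnv (P : Exp) (ρ : Env) : Prop :=
  ∀ y v, ρ y = some v → WellFormedVal P v ∧ EvalA P (Exp.var y) v.toExp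

def WellFormedState (P : Exp) (s : State) : Prop :=
  s.1 ∈ P.subexp ∧ WellFormedEnv P s.2

theorem wellFormedVal_clos_iff {P : Exp} {x : String} {e : Exp} {ρ : Env} :
    WellFormedVal P (Val.clos x e ρ) ↔ Exp.lam x e ∈ P.subexp ∧ WellFormedEnv P ρ := by
  constructor
  · rintro ⟨hlam, hval, hvar⟩
    exact ⟨hlam, fun y v hy => ⟨hval y v hy, hvar y v hy⟩⟩
  · rintro ⟨hlam, hρ⟩
    exact .clos hlam (fun y v hy => (hρ y v hy).1) (fun y v hy => (hρ y v hy).2)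

theorem WellFormedEnv.empty (P : Exp) : WellFormedEnv P Env.empty := by
  simp [WellFormedEnv, Env.empty]

theorem WellFormedEnv.update {P : Exp} {ρ : Env} {x : String} {v : Val}
    (hρ : WellFormedEnv P ρ) (hv : WellFormedVal P v) (hxv : EvalA P (Exp.var x) v.toExp) :
    WellFormedEnv P (ρ.update x v) := by
  intro y w hy
  by_cases hyx : y = x
  · subst hyx
    simp only [Env.update, if_pos, Option.some.injEq] at hy
    exact hy ▸ ⟨hv, hxv⟩
  · simp only [Env.update, if_neg hyx] at hy
    exact hρ y w hy

mutual

theorem EvalE.approx {P : Exp} {s : State} {v : Val} (h : EvalE s v)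
    (hs : WellFormedState P s) : EvalA P s.1 v.toExp ∧ WellFormedVal P v :=
  match h with
  | .value x e ρ => ⟨.value x e, wellFormedVal_clos_iff.mpr hs⟩
  | .var hx => (hs.2 _ _ hx).symm
  | .apply hc he =>
    have ⟨hca, hs'⟩ := hc.approx hs
    have ⟨hea, hv⟩ := he.approx hs'
    ⟨.apply hca hea, hv⟩

theorem CallC.approx {P : Exp} {s s' : State} (h : CallC s s')
    (hs : WellFormedState P s) : CallAC P s.1 s'.1 ∧ WellFormedState P s' :=
  match h with
  | .call h₁ h₂ =>
    have hmem := hs.1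
    have ⟨ha₁, hv₁⟩ := h₁.approx ⟨Exp.mem_subexp_of_app_left hmem, hs.2⟩
    have ⟨hlam, hρ₀⟩ := wellFormedVal_clos_iff.mp hv₁
    have ⟨ha₂, hv₂⟩ := h₂.approx ⟨Exp.mem_subexp_of_app_right hmem, hs.2⟩
    ⟨.call ha₁ ha₂, Exp.mem_subexp_of_lam hlam, WellFormedEnv.update hρ₀ hv₂ (.var hmem ha₁ ha₂)⟩

end

theorem Call.approx {P : Exp} {s s' : State} (h : Call s s') (hs : WellFormedState P s) :
    CallA P s.1 s'.1 ∧ WellFormedState P s' := by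
  rcases h with ⟨e₁, e₂, ρ⟩ | ⟨e₂, -⟩ | h
  · exact ⟨Or.inl (.oper e₁ e₂), Exp.mem_subexp_of_app_left hs.1, hs.2⟩
  · exact ⟨Or.inr (Or.inl (.opnd _ e₂)), Exp.mem_subexp_of_app_right hs.1, hs.2⟩
  · exact (h.approx hs).imp (Or.inr ∘ Or.inr) id

theorem WellFormedState.of_reachable {P : Exp} {s : State}
    (h : Relation.ReflTransGen Call (P, Env.empty) s) : WellFormedState P s := by
  induction h with
  | refl => exact ⟨P.mem_subexp_self, WellFormedEnv.empty P⟩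
  | tail _ hstep ih => exact (hstep.approx ih).2

/-- Soundness of the abstract interpretation: every exact (environment-based)
evaluation or call step from a state reachable from `P:[]` is matched by the
approximate semantics. -/
theorem abstract_interpretation_sound (P : Exp) (hP : P.fv = ∅) :
    (∀ (e : Exp) (ρ : Env) (v : Val),
      Relation.ReflTransGen Call (P, Env.empty) (e, ρ) → EvalE (e, ρ) v →
      EvalA P e v.toExp) ∧
    (∀ (e : Exp) (ρ : Env) (e' : Exp) (ρ' : Env),
      Relation.ReflTransGen Call (P, Env.empty) (e, ρ) → Call (e, ρ) (e', ρ') →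
      CallA P e e') :=
  ⟨fun _ _ _ hreach heval => (heval.approx (.of_reachable hreach)).1,
    fun _ _ _ _ hreach hcall => (hcall.approx (.of_reachable hreach)).1⟩
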